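/- arXiv:2105.06933 — 2 statements merged into one kernel-verified Lean document; each statement's English description precedes it below -/
import Mathlib

section
/- Let F : C → D preserve pullbacks and monos, S : C → Set, T : D → Set preserve pullbacks, with T ∘ F = S. Then γ_F = (F₀, (⊩_a)) with y ⊩_a x iff y = x (in T₀(F₀(a)) = S₀(a)) is a simulation CM^p(C;S) ⇀ CM^p(D;T): in particular, each partial function S₁(i,f) ∈ S[a,b] is tracked by T₁(F₁(i), F₁(f)) ∈ T[F₀(a), F₀(b)]. -/
open CategoryTheory Limits

universe w v u

/-- The partial function `S₁(i, f) : S₀(a) ⇀ S₀(b)` determined by a partial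
morphism `(i, f) : a ⇀ b`. -/
noncomputable def SPart {C : Type u} [Category.{v} C] (S : C ⥤ Type w) {s a b : C}
    (i : s ⟶ a) (f : s ⟶ b) : S.obj a →. S.obj b :=
  fun x => ⟨∃ y, S.map i y = x, fun h => S.map f h.choose⟩

/-- The class `S[a,b]` of partial functions of `CM^p(C;S)`. -/
def SPartClass {C : Type u} [Category.{v} C] (S : C ⥤ Type w) (a b : C) :
    Set (S.obj a →. S.obj b) :=
  {p | ∃ (s : C) (i : s ⟶ a) (f : s ⟶ b), Mono i ∧ p = SPart S i f}

/-- `f'` tracks `f` through realizability relations `Rσ`, `Rτ`. -/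
def Tracks {α β α' β' : Type w} (Rσ : α' → α → Prop) (Rτ : β' → β → Prop)
    (f : α →. β) (f' : α' →. β') : Prop :=
  ∀ x y, y ∈ f x → ∀ x', Rσ x' x → ∃ y', y' ∈ f' x' ∧ Rτ y' y

/-- for `F : C ⥤ D` preserving pullbacks and monos, and
pullback-preserving `S : C ⥤ Set`, `T : D ⥤ Set` with `T ∘ F = S`, the data
`γ_F = (F₀, ⊩)` with `y ⊩_a x ↔ y = x` (in `T₀(F₀(a)) = S₀(a)`, via `HEq`) is a
simulation `CM^p(C;S) ⇀ CM^p(D;T)`: in particular every `S₁(i,f) ∈ S[a,b]` is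
tracked by `T₁(F₁(i), F₁(f)) ∈ T[F₀(a), F₀(b)]`. -/
theorem gammaF_is_simulation_partial {C D : Type u} [Category.{v} C] [Category.{v} D]
    [HasPullbacks C] [HasPullbacks D]
    (F : C ⥤ D) [PreservesLimitsOfShape WalkingCospan F]
    (hmono : ∀ {s a : C} (i : s ⟶ a), Mono i → Mono (F.map i))
    (S : C ⥤ Type w) (T : D ⥤ Type w)
    [PreservesLimitsOfShape WalkingCospan S] [PreservesLimitsOfShape WalkingCospan T]
    (hFT : F ⋙ T = S) :
    -- (Siml1)
    (∀ (a : C) (x : S.obj a), ∃ y : T.obj (F.obj a), HEq y x) ∧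
    -- (Siml2): S₁(i,f) is tracked by T₁(F₁(i), F₁(f)), which lies in T[F₀a, F₀b]
    (∀ (a b s : C) (i : s ⟶ a) (f : s ⟶ b), Mono i →
      SPart T (F.map i) (F.map f) ∈ SPartClass T (F.obj a) (F.obj b) ∧
      Tracks (fun (y : T.obj (F.obj a)) (x : S.obj a) => HEq y x)
             (fun (y : T.obj (F.obj b)) (x : S.obj b) => HEq y x)
             (SPart S i f) (SPart T (F.map i) (F.map f))) := by
  subst hFT
  refine ⟨fun a x => ⟨x, HEq.refl x⟩, fun a b s i f hm =>
    ⟨⟨F.obj s, F.map i, F.map f, hmono i hm, rfl⟩, ?_⟩⟩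
  intro x y hy x' hx'
  cases hx'
  exact ⟨y, hy, HEq.refl y⟩
end

section
/- Let C have pullbacks and η : S ⇒ T be a natural transformation between pullback-preserving functors S, T : C → Set. Then γ_η = (id, (⊩_a)) with y ⊩_a x iff y = η_a(x) is a simulation CM^p(C;S) ⇀ CM^p(C;T): each partial function S₁(i,f) is tracked by T₁(i,f). Moreover η ↦ γ_η is faithful: γ_η = γ_θ implies η = θ. -/
open CategoryTheory Limits

universe w v u

namespace SPart

variable {C : Type u} [Category.{v} C] (S : C ⥤ Type w) {s a b : C} (i : s ⟶ a) (f : s ⟶ b)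

theorem exists_of_mem {x : S.obj a} {y : S.obj b} (h : y ∈ SPart S i f x) :
    ∃ z, S.map i z = x ∧ S.map f z = y := by
  obtain ⟨hdom, rfl⟩ := h
  exact ⟨hdom.choose, hdom.choose_spec, rfl⟩

theorem map_mem (hi : Function.Injective (S.map i)) (z : S.obj s) :
    S.map f z ∈ SPart S i f (S.map i z) := by
  have hdom : ∃ z', S.map i z' = S.map i z := ⟨z, rfl⟩
  refine ⟨hdom, ?_⟩
  change S.map f hdom.choose = S.map f z
  rw [hi hdom.choose_spec]

theorem mem_sPartClass [Mono i] : SPart S i f ∈ SPartClass S a b :=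
  ⟨s, i, f, inferInstance, rfl⟩

end SPart

/-- The naturality squares of `η` at `i` and `f` carry a witness `z` of `x ∈ dom S₁(i,f)` to the
witness `η_s z` of `η_a x ∈ dom T₁(i,f)`. -/
theorem tracks_sPart_of_injective {C : Type u} [Category.{v} C] {S T : C ⥤ Type w} (η : S ⟶ T)
    {s a b : C} (i : s ⟶ a) (f : s ⟶ b) (hi : Function.Injective (T.map i)) :
    Tracks (fun y x => y = η.app a x) (fun y x => y = η.app b x) (SPart S i f) (SPart T i f) := by
  rintro _ _ hy _ rfl
  obtain ⟨z, rfl, rfl⟩ := SPart.exists_of_mem S i f hy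
  refine ⟨T.map f (η.app s z), ?_, (NatTrans.naturality_apply η f z).symm⟩
  have hx : η.app a (S.map i z) = T.map i (η.app s z) := NatTrans.naturality_apply η i z
  exact hx ▸ SPart.map_mem T i f hi (η.app s z)

theorem gamma_eta_is_simulation_partial_general {C : Type u} [Category.{v} C]
    (S T : C ⥤ Type w)
    [PreservesLimitsOfShape WalkingCospan T]
    (η : S ⟶ T) :
    -- (Siml1)
    (∀ (a : C) (x : S.obj a), ∃ y : T.obj a, y = η.app a x) ∧
    -- (Siml2): S₁(i,f) is tracked by T₁(i,f), which lies in T[a,b]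
    (∀ (a b s : C) (i : s ⟶ a) (f : s ⟶ b), Mono i →
      SPart T i f ∈ SPartClass T a b ∧
      Tracks (fun (y : T.obj a) (x : S.obj a) => y = η.app a x)
             (fun (y : T.obj b) (x : S.obj b) => y = η.app b x)
             (SPart S i f) (SPart T i f)) ∧
    -- faithfulness
    (∀ θ : S ⟶ T,
      (∀ (a : C) (y : T.obj a) (x : S.obj a), y = η.app a x ↔ y = θ.app a x) →
      η = θ) := by
  refine ⟨fun a x => ⟨η.app a x, rfl⟩, fun a b s i f hi => ⟨SPart.mem_sPartClass T i f, ?_⟩,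
    fun θ h => ?_⟩
  · have hTi : Mono (T.map i) := preserves_mono_of_preservesLimit T i
    exact tracks_sPart_of_injective η i f ((mono_iff_injective _).mp hTi)
  · ext a x
    exact (h a (η.app a x) x).mp rfl

/-- for `C` with pullbacks and a natural transformation
`η : S ⇒ T` between pullback-preserving functors `S, T : C ⥤ Set`, the data
`γ_η = (id, ⊩)` with `y ⊩_a x ↔ y = η_a(x)` is a simulation
`CM^p(C;S) ⇀ CM^p(C;T)`: each `S₁(i,f)` is tracked by `T₁(i,f)`.  Moreover
`η ↦ γ_η` is faithful: `γ_η = γ_θ` implies `η = θ`. -/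
theorem gamma_eta_is_simulation_partial {C : Type u} [Category.{v} C] [HasPullbacks C]
    (S T : C ⥤ Type w)
    [PreservesLimitsOfShape WalkingCospan S] [PreservesLimitsOfShape WalkingCospan T]
    (η : S ⟶ T) :
    -- (Siml1)
    (∀ (a : C) (x : S.obj a), ∃ y : T.obj a, y = η.app a x) ∧
    -- (Siml2): S₁(i,f) is tracked by T₁(i,f), which lies in T[a,b]
    (∀ (a b s : C) (i : s ⟶ a) (f : s ⟶ b), Mono i →
      SPart T i f ∈ SPartClass T a b ∧
      Tracks (fun (y : T.obj a) (x : S.obj a) => y = η.app a x)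
             (fun (y : T.obj b) (x : S.obj b) => y = η.app b x)
             (SPart S i f) (SPart T i f)) ∧
    -- faithfulness
    (∀ θ : S ⟶ T,
      (∀ (a : C) (y : T.obj a) (x : S.obj a), y = η.app a x ↔ y = θ.app a x) →
      η = θ) :=
  gamma_eta_is_simulation_partial_general S T η
end
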